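/- arXiv:2511.14524 — 6 statements merged into one kernel-verified Lean document; each statement's English description precedes it below -/
import Mathlib

section
/- Let N ≥ 3, 3 ≤ b ≤ N, and n ≥ 2, and let I_1,…,I_n be independent, each uniformly distributed over the b-element subsets of a fixed N-element set. Then Pr[there exist i ≠ j with |I_i ∩ I_j| ≥ 3] ≤ C(n,2) · C(b,3) · (b/(N−2))³, where C(·,·) denotes the binomial coefficient. -/
/-!
Union bound over the `C(n,2)` pairs `{i, j}` and the `C(N,3)` triples `T`: the event
`T ⊆ I_i ∩ I_j` has probability `(C(N-3,b-3) / C(N,b))² = (C(b,3) / C(N,3))²`, so the total is at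
most `C(n,2) · C(b,3) · C(b,3) / C(N,3)`. Finally `C(b,3) / C(N,3)` is a ratio of descending
factorials `b(b-1)(b-2) / (N(N-1)(N-2)) ≤ (b / (N-2))³`.
-/

open Finset

section
variable {ι β : Type*} [Fintype ι] [DecidableEq ι] [Fintype β]

theorem card_filter_apply_and_apply {i j : ι} (hij : i ≠ j) (p q : β → Prop)
    [DecidablePred p] [DecidablePred q] :
    #{I : ι → β | p (I i) ∧ q (I j)} =
      #{x | p x} * #{x | q x} * Fintype.card β ^ (Fintype.card ι - 2) := by
  have hpi : ({I : ι → β | p (I i) ∧ q (I j)} : Finset _) = Fintype.piFinset fun k =>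
      if k = i then ({x | p x} : Finset β) else if k = j then ({x | q x} : Finset β) else univ := by
    ext I
    simp only [mem_filter, mem_univ, true_and, Fintype.mem_piFinset]
    constructor
    · rintro ⟨hi, hj⟩ k
      split_ifs with hki hkj
      · subst hki; simpa using hi
      · subst hkj; simpa using hj
      · exact mem_univ _
    · intro h
      have hi := h i
      have hj := h j
      simp_all [hij.symm]
  have hj : j ∈ univ.erase i := mem_erase.2 ⟨hij.symm, mem_univ j⟩
  rw [hpi, Fintype.card_piFinset, ← mul_prod_erase _ _ (mem_univ i),
    ← mul_prod_erase _ _ hj, prod_congr rfl (g := fun _ => Fintype.card β), prod_const,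
    card_erase_of_mem hj, card_erase_of_mem (mem_univ i), card_univ]
  · simp [hij.symm, mul_assoc, Nat.sub_sub]
  · intro k hk
    simp only [mem_erase] at hk
    simp [hk.1, hk.2.1]

theorem card_filter_rel_apply_apply [DecidableEq β] {i j : ι} (hij : i ≠ j)
    (r : β → β → Prop) [DecidableRel r] :
    #{I : ι → β | r (I i) (I j)} =
      #{z : β × β | r z.1 z.2} * Fintype.card β ^ (Fintype.card ι - 2) := by
  rw [card_eq_sum_card_fiberwise (f := fun I => (I i, I j)) (t := {z : β × β | r z.1 z.2})
    (fun I hI => by simpa using hI), ← smul_eq_mul, ← sum_const]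
  refine sum_congr rfl fun z hz => ?_
  rw [filter_filter, filter_congr (q := fun I : ι → β => I i = z.1 ∧ I j = z.2),
    card_filter_apply_and_apply hij (· = z.1) (· = z.2)]
  · simp [filter_eq']
  · intro I _
    simp only [mem_filter, mem_univ, true_and] at hz
    constructor
    · rintro ⟨-, h⟩; simpa [Prod.ext_iff] using h
    · rintro ⟨h1, h2⟩; simp [h1, h2, hz]

theorem card_filter_exists_ne_rel_le (r : β → β → Prop) [DecidableRel r] [Std.Symm r] :
    #{I : ι → β | ∃ i j, i ≠ j ∧ r (I i) (I j)} ≤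
      (Fintype.card ι).choose 2 * #{z : β × β | r z.1 z.2} *
        Fintype.card β ^ (Fintype.card ι - 2) := by
  classical
  calc #{I : ι → β | ∃ i j, i ≠ j ∧ r (I i) (I j)}
      ≤ #((powersetCard 2 univ).biUnion fun s : Finset ι =>
          {I : ι → β | ∃ i ∈ s, ∃ j ∈ s, i ≠ j ∧ r (I i) (I j)}) := by
        refine card_le_card fun I hI => ?_
        obtain ⟨i, j, hij, hr⟩ := (mem_filter.1 hI).2
        exact mem_biUnion.2 ⟨{i, j}, mem_powersetCard.2 ⟨subset_univ _, card_pair hij⟩,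
          mem_filter.2 ⟨mem_univ _, i, by simp, j, by simp, hij, hr⟩⟩
    _ ≤ ∑ _s ∈ powersetCard 2 (univ : Finset ι),
          #{z : β × β | r z.1 z.2} * Fintype.card β ^ (Fintype.card ι - 2) := by
        refine card_biUnion_le.trans (sum_le_sum fun s hs => ?_)
        obtain ⟨i, j, hij, rfl⟩ := card_eq_two.1 (mem_powersetCard.1 hs).2
        rw [← card_filter_rel_apply_apply hij]
        refine card_le_card fun I hI => ?_
        simp only [mem_filter, mem_univ, true_and, mem_insert, mem_singleton] at hI ⊢
        obtain ⟨a, rfl | rfl, c, rfl | rfl, hac, h⟩ := hI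
        all_goals first | exact absurd rfl hac | exact h | exact Std.Symm.symm _ _ h
    _ = _ := by rw [sum_const, card_powersetCard, card_univ, smul_eq_mul, mul_assoc]
end

theorem Nat.choose_div_choose_le_pow (m : ℕ) {n k : ℕ} (hk : k ≤ n) :
    (m.choose k : ℝ) / n.choose k ≤ (m / (n + 1 - k : ℝ)) ^ k := by
  have hpos : (0 : ℝ) < n + 1 - k := by
    have : (k : ℝ) ≤ n := by exact_mod_cast hk
    linarith
  have hfac : (0 : ℝ) < k.factorial := by exact_mod_cast k.factorial_pos
  have hdesc (a : ℕ) : (a.choose k : ℝ) = a.descFactorial k / k.factorial := by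
    rw [Nat.descFactorial_eq_factorial_mul_choose, Nat.cast_mul, mul_div_cancel_left₀ _ hfac.ne']
  rw [hdesc, hdesc, div_div_div_cancel_right₀ hfac.ne', div_pow]
  refine div_le_div₀ (by positivity) (by exact_mod_cast m.descFactorial_le_pow k)
    (by positivity) ?_
  have := n.pow_sub_le_descFactorial k
  rw [← Nat.cast_le (α := ℝ), Nat.cast_pow, Nat.cast_sub (by omega)] at this
  simpa using this

section
variable {α : Type*} [Fintype α] [DecidableEq α]

theorem card_filter_subset_val {b : ℕ} {T : Finset α} (hT : #T ≤ b) :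
    #{A : {s : Finset α // #s = b} | T ⊆ A.1} = (Fintype.card α - #T).choose (b - #T) := by
  rw [← card_univ, ← card_filter_powersetCard_subset T univ b (subset_univ T) hT,
    ← card_map (Function.Embedding.subtype _)]
  congr 1
  ext s
  simp [and_comm]

theorem card_filter_le_card_inter_le {b k : ℕ} (hk : k ≤ b) :
    #{P : {s : Finset α // #s = b} × {s : Finset α // #s = b} | k ≤ #(P.1.1 ∩ P.2.1)} ≤
      (Fintype.card α).choose k * ((Fintype.card α - k).choose (b - k)) ^ 2 := by
  calc #{P : {s : Finset α // #s = b} × {s : Finset α // #s = b} | k ≤ #(P.1.1 ∩ P.2.1)}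
      ≤ #((powersetCard k univ).biUnion fun T =>
          {P : {s : Finset α // #s = b} × {s : Finset α // #s = b} | T ⊆ P.1.1 ∧ T ⊆ P.2.1}) := by
        refine card_le_card fun P hP => ?_
        obtain ⟨T, hT, hTk⟩ := exists_subset_card_eq (mem_filter.1 hP).2
        exact mem_biUnion.2 ⟨T, mem_powersetCard.2 ⟨subset_univ T, hTk⟩,
          mem_filter.2 ⟨mem_univ _, hT.trans inter_subset_left, hT.trans inter_subset_right⟩⟩
    _ ≤ ∑ _T ∈ powersetCard k (univ : Finset α), ((Fintype.card α - k).choose (b - k)) ^ 2 := by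
        refine card_biUnion_le.trans (sum_le_sum fun T hT => ?_)
        obtain ⟨-, rfl⟩ := mem_powersetCard.1 hT
        rw [← card_filter_subset_val hk, sq, ← card_product, ← filter_product, univ_product_univ]
    _ = _ := by rw [sum_const, card_powersetCard, card_univ, smul_eq_mul]

theorem card_filter_le_card_inter_div_sq_le {b k : ℕ} (hk : k ≤ b) (hb : b ≤ Fintype.card α) :
    (#{P : {s : Finset α // #s = b} × {s : Finset α // #s = b} | k ≤ #(P.1.1 ∩ P.2.1)} : ℝ) /
        (Fintype.card α).choose b ^ 2 ≤
      b.choose k * (b / (Fintype.card α + 1 - k : ℝ)) ^ k := by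
  set N := Fintype.card α
  have hNb : (0 : ℝ) < N.choose b := by exact_mod_cast Nat.choose_pos hb
  have hNk : (0 : ℝ) < N.choose k := by exact_mod_cast Nat.choose_pos (hk.trans hb)
  have hmul : (N.choose b * b.choose k : ℝ) = N.choose k * (N - k).choose (b - k) := by
    exact_mod_cast Nat.choose_mul hk
  have hcount : (#{P : {s : Finset α // #s = b} × {s : Finset α // #s = b} |
      k ≤ #(P.1.1 ∩ P.2.1)} : ℝ) ≤ N.choose k * ((N - k).choose (b - k) : ℝ) ^ 2 := by
    exact_mod_cast card_filter_le_card_inter_le hk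
  calc _ ≤ N.choose k * ((N - k).choose (b - k) : ℝ) ^ 2 / N.choose b ^ 2 := by gcongr
    _ = b.choose k * (b.choose k / N.choose k) := by
        field_simp
        rw [← mul_pow, ← mul_pow, hmul]
    _ ≤ _ := by
        gcongr
        exact b.choose_div_choose_le_pow (hk.trans hb)
end

theorem prob_some_pair_overlap_ge_three_general (N b n : ℕ) (hb : 3 ≤ b)
    (hbN : b ≤ N) (hn : 2 ≤ n) :
    ((univ.filter (fun I : Fin n → {s : Finset (Fin N) // s.card = b} =>
        ∃ i j, i ≠ j ∧ 3 ≤ ((I i).1 ∩ (I j).1).card)).card : ℝ)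
      / ((N.choose b : ℝ)) ^ n
    ≤ (n.choose 2 : ℝ) * (b.choose 3 : ℝ) * ((b : ℝ) / ((N : ℝ) - 2)) ^ 3 := by
  have : Std.Symm fun A B : {s : Finset (Fin N) // #s = b} => 3 ≤ #(A.1 ∩ B.1) :=
    ⟨fun A B h => by rwa [inter_comm]⟩
  have hunion := card_filter_exists_ne_rel_le (ι := Fin n)
    (fun A B : {s : Finset (Fin N) // #s = b} => 3 ≤ #(A.1 ∩ B.1))
  have hpair := card_filter_le_card_inter_div_sq_le (α := Fin N) hb (by simpa using hbN)
  simp only [Fintype.card_fin, Fintype.card_finset_len, Nat.cast_ofNat] at hunion hpair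
  generalize #{P : {s : Finset (Fin N) // #s = b} × {s : Finset (Fin N) // #s = b} |
    3 ≤ #(P.1.1 ∩ P.2.1)} = R at hunion hpair
  have hC : (0 : ℝ) < N.choose b := by exact_mod_cast Nat.choose_pos hbN
  have hpow : (N.choose b : ℝ) ^ n = N.choose b ^ (n - 2) * N.choose b ^ 2 := by
    rw [← pow_add, Nat.sub_add_cancel hn]
  calc _ ≤ (n.choose 2 * R * N.choose b ^ (n - 2) : ℝ) / N.choose b ^ n := by
        gcongr
        exact_mod_cast hunion
    _ = n.choose 2 * (R / N.choose b ^ 2 : ℝ) := by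
        rw [hpow]
        field_simp
    _ ≤ n.choose 2 * (b.choose 3 * (b / (N + 1 - 3 : ℝ)) ^ 3) := by gcongr
    _ = _ := by ring_nf

theorem prob_some_pair_overlap_ge_three (N b n : ℕ) (hN : 3 ≤ N) (hb : 3 ≤ b)
    (hbN : b ≤ N) (hn : 2 ≤ n) :
    ((univ.filter (fun I : Fin n → {s : Finset (Fin N) // s.card = b} =>
        ∃ i j, i ≠ j ∧ 3 ≤ ((I i).1 ∩ (I j).1).card)).card : ℝ)
      / ((N.choose b : ℝ)) ^ n
    ≤ (n.choose 2 : ℝ) * (b.choose 3 : ℝ) * ((b : ℝ) / ((N : ℝ) - 2)) ^ 3 :=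
  prob_some_pair_overlap_ge_three_general N b n hb hbN hn
end

section
/- Let 1 ≤ k ≤ b ≤ N, let I be a fixed b-element subset of an N-element set S, and let J be uniformly distributed over the b-element subsets of S. Then Pr[|I ∩ J| ≥ k] ≤ C(b,k) · ∏_{i=0}^{k−1} (b−i)/(N−i), where C(b,k) denotes the binomial coefficient. -/
/-! A subset J with |I ∩ J| ≥ k contains one of the C(b, k) subsets K ⊆ I of size k, and each such K
lies in exactly C(N - k, b - k) of the b-subsets of S; a union bound over K and the identity
C(N - k, b - k) / C(N, b) = ∏_{i<k} (b - i) / (N - i) give the claim. -/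

open Finset

theorem Nat.cast_descFactorial_eq_prod_range {R : Type*} [CommRing R] {n k : ℕ} (hkn : k ≤ n) :
    (n.descFactorial k : R) = ∏ i ∈ range k, ((n : R) - i) := by
  rw [Nat.descFactorial_eq_prod_range, Nat.cast_prod]
  refine prod_congr rfl fun i hi => ?_
  rw [Nat.cast_sub (by grind)]

theorem Nat.cast_choose_sub_div_choose {K : Type*} [Field K] [CharZero K] {N b k : ℕ}
    (hkb : k ≤ b) (hbN : b ≤ N) :
    ((N - k).choose (b - k) : K) / N.choose b = ∏ i ∈ range k, ((b : K) - i) / ((N : K) - i) := by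
  have hNb : (N.choose b : K) ≠ 0 := by exact_mod_cast (Nat.choose_pos hbN).ne'
  have hNk : (N.choose k : K) ≠ 0 := by exact_mod_cast (Nat.choose_pos (hkb.trans hbN)).ne'
  have hk : (k.factorial : K) ≠ 0 := by exact_mod_cast k.factorial_ne_zero
  calc ((N - k).choose (b - k) : K) / N.choose b = b.choose k / N.choose k := by
        rw [div_eq_div_iff hNb hNk]
        norm_cast
        rw [mul_comm, ← Nat.choose_mul hkb, mul_comm]
    _ = b.descFactorial k / N.descFactorial k := by
        simp only [Nat.descFactorial_eq_factorial_mul_choose, Nat.cast_mul, mul_div_mul_left _ _ hk]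
    _ = _ := by
        rw [prod_div_distrib, Nat.cast_descFactorial_eq_prod_range hkb,
          Nat.cast_descFactorial_eq_prod_range (hkb.trans hbN)]

section

variable {α : Type*} [Fintype α] [DecidableEq α]

theorem card_supersets_of_card_le (K : Finset α) {b : ℕ} (hKb : #K ≤ b) :
    #{J : {s : Finset α // #s = b} | K ⊆ J.1} = (Fintype.card α - #K).choose (b - #K) := by
  have hdisj {A : Finset α} (hA : A ⊆ Kᶜ) : Disjoint A K := by
    rwa [subset_compl_iff_disjoint_right] at hA
  rw [← card_compl, ← card_powersetCard (b - #K) Kᶜ]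
  refine card_bij' (fun J _ => J.1 \ K) (fun A hA => ⟨A ∪ K, ?_⟩) ?_ ?_ ?_ ?_
  · obtain ⟨hAK, hA⟩ := mem_powersetCard.1 hA
    rw [card_union_of_disjoint (hdisj hAK), hA, Nat.sub_add_cancel hKb]
  · intro J hJ
    rw [mem_powersetCard, card_sdiff_of_subset (mem_filter.1 hJ).2, J.2]
    exact ⟨fun a ha => mem_compl.2 (mem_sdiff.1 ha).2, rfl⟩
  · intro A hA
    exact mem_filter.2 ⟨mem_univ _, subset_union_right⟩
  · intro J hJ
    exact Subtype.ext (sdiff_union_of_subset (mem_filter.1 hJ).2)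
  · intro A hA
    rw [union_sdiff_right, sdiff_eq_self_of_disjoint (hdisj (mem_powersetCard.1 hA).1)]

theorem card_le_card_inter_le (I : Finset α) {b k : ℕ} (hkb : k ≤ b) :
    #{J : {s : Finset α // #s = b} | k ≤ #(I ∩ J.1)}
      ≤ (#I).choose k * (Fintype.card α - k).choose (b - k) := by
  calc #{J : {s : Finset α // #s = b} | k ≤ #(I ∩ J.1)}
      ≤ #((I.powersetCard k).biUnion fun K => {J : {s : Finset α // #s = b} | K ⊆ J.1}) := by
        refine card_le_card fun J hJ => ?_
        obtain ⟨K, hKIJ, hK⟩ := exists_subset_card_eq (mem_filter.1 hJ).2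
        exact mem_biUnion.2 ⟨K, mem_powersetCard.2 ⟨hKIJ.trans inter_subset_left, hK⟩,
          mem_filter.2 ⟨mem_univ _, hKIJ.trans inter_subset_right⟩⟩
    _ ≤ ∑ K ∈ I.powersetCard k, #{J : {s : Finset α // #s = b} | K ⊆ J.1} := card_biUnion_le
    _ = (#I).choose k * (Fintype.card α - k).choose (b - k) := by
        rw [sum_congr rfl fun K hK => (mem_powersetCard.1 hK).2 ▸ card_supersets_of_card_le K
          ((mem_powersetCard.1 hK).2 ▸ hkb), sum_const, card_powersetCard, smul_eq_mul]

end

theorem prob_overlap_ge_k_general (N b k : ℕ) (hkb : k ≤ b)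
    (I : Finset (Fin N)) (hI : I.card = b) :
    ((univ.filter (fun J : {s : Finset (Fin N) // s.card = b} =>
        k ≤ (I ∩ J.1).card)).card : ℝ) / (N.choose b : ℝ)
    ≤ (b.choose k : ℝ) * ∏ i ∈ Finset.range k, ((b : ℝ) - i) / ((N : ℝ) - i) := by
  have hbN : b ≤ N := hI ▸ (card_le_univ I).trans_eq (Fintype.card_fin N)
  rw [← Nat.cast_choose_sub_div_choose hkb hbN, ← mul_div_assoc, ← Nat.cast_mul]
  gcongr
  simpa [hI] using card_le_card_inter_le I hkb

theorem prob_overlap_ge_k (N b k : ℕ) (hk : 1 ≤ k) (hkb : k ≤ b) (hbN : b ≤ N)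
    (I : Finset (Fin N)) (hI : I.card = b) :
    ((univ.filter (fun J : {s : Finset (Fin N) // s.card = b} =>
        k ≤ (I ∩ J.1).card)).card : ℝ) / (N.choose b : ℝ)
    ≤ (b.choose k : ℝ) * ∏ i ∈ Finset.range k, ((b : ℝ) - i) / ((N : ℝ) - i) :=
  prob_overlap_ge_k_general N b k hkb I hI
end

section
/- There exists a constant c₀ > 0 such that for every N ≥ 2 and every family {ρ_{l,m} : 1 ≤ l < m ≤ N} of probability distributions on {0,1}² that is marginally consistent (for each coordinate l, all pairs containing l induce the same single-bit marginal) and satisfies |ρ_{l,m}(a,a') − 1/4| ≤ c₀/N² for all 1 ≤ l < m ≤ N and all (a,a') ∈ {0,1}², there exists a probability distribution P on {0,1}^N such that for every l < m the joint distribution of (v_l, v_m) under v ∼ P equals ρ_{l,m}. -/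
/-!
Write bits as spins `±1`. The pair marginal of a function `P` on `{0,1}^N` at `(l, m)` only
depends on its Walsh coefficients at `∅`, `{l}`, `{m}` and `{l, m}`, and a distribution on
`{0,1}²` is determined by its four spin moments. So let `P` have constant coefficient `1`,
coefficient at `{l}` the spin mean of `ρ_l` (well defined by marginal consistency), coefficient at
`{l, m}` the spin correlation of `ρ_{l,m}`, and no higher terms. It has the prescribed pair
marginals, and near uniformity makes its at most `N + N²` nonconstant coefficients `O(1/N²)`,
which keeps `P` nonnegative.
-/

open Finset

noncomputable def spin (b : Bool) : ℝ := if b then 1 else -1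

@[simp] lemma spin_mul_self (b : Bool) : spin b * spin b = 1 := by cases b <;> norm_num [spin]

@[simp] lemma abs_spin (b : Bool) : |spin b| = 1 := by cases b <;> norm_num [spin]

lemma sum_spin : ∑ b, spin b = 0 := by norm_num [spin]

noncomputable def walsh {ι : Type*} (S : Finset ι) (v : ι → Bool) : ℝ := ∏ i ∈ S, spin (v i)

lemma abs_walsh {ι : Type*} (S : Finset ι) (v : ι → Bool) : |walsh S v| = 1 := by
  simp [walsh, Finset.abs_prod]

section Walsh

variable {ι : Type*} [DecidableEq ι]

lemma walsh_mul_walsh (S T : Finset ι) (v : ι → Bool) :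
    walsh S v * walsh T v = walsh (symmDiff S T) v := by
  have hsq : (∏ i ∈ S ∩ T, spin (v i)) * ∏ i ∈ S ∩ T, spin (v i) = 1 := by
    rw [← prod_mul_distrib]; simp
  rw [walsh, walsh, walsh, ← prod_union_inter, symmDiff_eq_sup_sdiff_inf,
    ← prod_sdiff (inter_subset_union : S ∩ T ⊆ S ∪ T), mul_assoc, hsq, mul_one]
  rfl

variable [Fintype ι]

lemma sum_walsh (S : Finset ι) :
    ∑ v, walsh S v = if S = ∅ then (2 : ℝ) ^ Fintype.card ι else 0 := by
  have hfactor : ∑ v, walsh S v = ∏ i : ι, ∑ b, if i ∈ S then spin b else 1 := by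
    rw [Fintype.prod_sum]
    refine sum_congr rfl fun v _ => ?_
    rw [walsh, ← Fintype.prod_ite_mem]
  rw [hfactor]
  split_ifs with hS
  · simp [hS, prod_const, card_univ]
  · obtain ⟨i, hi⟩ := nonempty_iff_ne_empty.mpr hS
    exact prod_eq_zero (mem_univ i) (by simp only [hi, if_true, sum_spin])

lemma sum_walsh_mul_walsh (S T : Finset ι) :
    ∑ v, walsh S v * walsh T v = if S = T then (2 : ℝ) ^ Fintype.card ι else 0 := by
  simp only [walsh_mul_walsh, sum_walsh, ← bot_eq_empty, symmDiff_eq_bot]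

end Walsh

lemma Finset.pair_eq_pair_iff_of_lt {ι : Type*} [LinearOrder ι] {i j k l : ι} (hij : i < j)
    (hkl : k < l) : ({i, j} : Finset ι) = {k, l} ↔ i = k ∧ j = l := by
  constructor
  · intro h
    have hi : i ∈ ({k, l} : Finset ι) := h ▸ mem_insert_self i {j}
    have hj : j ∈ ({k, l} : Finset ι) := h ▸ mem_insert_of_mem (mem_singleton_self j)
    have hk : k ∈ ({i, j} : Finset ι) := h.symm ▸ mem_insert_self k {l}
    simp only [mem_insert, mem_singleton] at hi hj hk
    grind
  · rintro ⟨rfl, rfl⟩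
    rfl

section WalshDensity

variable {ι : Type*} [Fintype ι] [LinearOrder ι]

variable (ι) in
def orderedPairs : Finset (ι × ι) := univ.filter fun p => p.1 < p.2

noncomputable def walshDensity (s : ι → ℝ) (t : ι × ι → ℝ) (v : ι → Bool) : ℝ :=
  (1 + ∑ i, s i * walsh {i} v + ∑ p ∈ orderedPairs ι, t p * walsh {p.1, p.2} v) /
    2 ^ Fintype.card ι

variable (s : ι → ℝ) (t : ι × ι → ℝ)

lemma sum_walshDensity_mul_walsh (T : Finset ι) :
    ∑ v, walshDensity s t v * walsh T v =
      (if T = ∅ then 1 else 0) + ∑ i, (if {i} = T then s i else 0) +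
        ∑ p ∈ orderedPairs ι, (if {p.1, p.2} = T then t p else 0) := by
  simp only [walshDensity, div_mul_eq_mul_div, ← sum_div, add_mul, one_mul, sum_mul,
    sum_add_distrib]
  rw [sum_comm (s := univ), sum_comm (s := univ) (t := orderedPairs ι)]
  simp only [mul_assoc, ← mul_sum, sum_walsh, sum_walsh_mul_walsh, mul_ite, mul_zero]
  field_simp
  simp only [mul_add, mul_sum, mul_ite, mul_one, mul_zero]

lemma sum_walshDensity : ∑ v, walshDensity s t v = 1 := by
  simpa [walsh] using sum_walshDensity_mul_walsh s t ∅

lemma sum_walshDensity_mul_walsh_singleton (k : ι) :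
    ∑ v, walshDensity s t v * walsh {k} v = s k := by
  have hpair : ∀ p ∈ orderedPairs ι, ({p.1, p.2} : Finset ι) ≠ {k} := fun p hp h => by
    simpa [card_pair (mem_filter.mp hp).2.ne] using congrArg card h
  simp [sum_walshDensity_mul_walsh, sum_eq_zero fun p hp => if_neg (hpair p hp)]

lemma sum_walshDensity_mul_walsh_pair {k l : ι} (hkl : k < l) :
    ∑ v, walshDensity s t v * walsh {k, l} v = t (k, l) := by
  have hsingle : ∀ i, ({i} : Finset ι) ≠ {k, l} := fun i h => by
    simpa [card_pair hkl.ne] using congrArg card h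
  have hpair : ∀ p ∈ orderedPairs ι, ({p.1, p.2} : Finset ι) = {k, l} ↔ p = (k, l) :=
    fun p hp => (pair_eq_pair_iff_of_lt (mem_filter.mp hp).2 hkl).trans
      (Prod.ext_iff (y := (k, l))).symm
  rw [sum_walshDensity_mul_walsh, if_neg (insert_ne_empty _ _),
    sum_eq_zero fun i _ => if_neg (hsingle i),
    sum_congr rfl fun p hp => if_congr (hpair p hp) rfl rfl, sum_ite_eq']
  simp [orderedPairs, hkl]

lemma walshDensity_nonneg {s : ι → ℝ} {t : ι × ι → ℝ} {ε : ℝ} (hε : 0 ≤ ε)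
    (hs : ∀ i, |s i| ≤ ε) (ht : ∀ p ∈ orderedPairs ι, |t p| ≤ ε)
    (hsmall : (Fintype.card ι + Fintype.card ι ^ 2) * ε ≤ 1) (v : ι → Bool) :
    0 ≤ walshDensity s t v := by
  have hlin : |∑ i, s i * walsh {i} v| ≤ Fintype.card ι * ε := by
    calc |∑ i, s i * walsh {i} v| ≤ ∑ i, |s i * walsh {i} v| := abs_sum_le_sum_abs _ _
      _ ≤ ∑ _i : ι, ε := sum_le_sum fun i _ => by rw [abs_mul, abs_walsh, mul_one]; exact hs i
      _ = Fintype.card ι * ε := by simp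
  have hquad : |∑ p ∈ orderedPairs ι, t p * walsh {p.1, p.2} v| ≤ Fintype.card ι ^ 2 * ε := by
    calc |∑ p ∈ orderedPairs ι, t p * walsh {p.1, p.2} v|
        ≤ ∑ p ∈ orderedPairs ι, |t p * walsh {p.1, p.2} v| := abs_sum_le_sum_abs _ _
      _ ≤ ∑ _p ∈ orderedPairs ι, ε :=
          sum_le_sum fun p hp => by rw [abs_mul, abs_walsh, mul_one]; exact ht p hp
      _ = #(orderedPairs ι) * ε := by simp
      _ ≤ Fintype.card ι ^ 2 * ε := by
          gcongr
          exact_mod_cast (card_filter_le _ _).trans (by simp [sq])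
  rw [abs_le] at hlin hquad
  exact div_nonneg (by linarith [hlin.1, hquad.1]) (by positivity)

end WalshDensity

lemma eq_spin_moments (x : Bool → Bool → ℝ) (a a' : Bool) :
    x a a' = (∑ b, ∑ b', x b b' + spin a * ∑ b, spin b * ∑ b', x b b' +
      spin a' * ∑ b', spin b' * ∑ b, x b b' +
      spin a * spin a' * ∑ b, ∑ b', spin b * spin b' * x b b') / 4 := by
  cases a <;> cases a' <;> simp [spin] <;> ring

lemma abs_spin_moments_le {x : Bool → Bool → ℝ} {δ : ℝ} (h : ∀ b b', |x b b' - 1 / 4| ≤ δ) :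
    |∑ b, spin b * ∑ b', x b b'| ≤ 4 * δ ∧ |∑ b', spin b' * ∑ b, x b b'| ≤ 4 * δ ∧
      |∑ b, ∑ b', spin b * spin b' * x b b'| ≤ 4 * δ := by
  have h₁ := abs_le.mp (h true true)
  have h₂ := abs_le.mp (h true false)
  have h₃ := abs_le.mp (h false true)
  have h₄ := abs_le.mp (h false false)
  simp only [Fintype.sum_bool, spin, if_true, Bool.false_eq_true, if_false, abs_le]
  refine ⟨⟨?_, ?_⟩, ⟨?_, ?_⟩, ⟨?_, ?_⟩⟩ <;> linarith

lemma sum_filter_eq_walsh_moments {ι : Type*} [Fintype ι] [DecidableEq ι]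
    (P : (ι → Bool) → ℝ) {l m : ι} (hlm : l ≠ m) (a a' : Bool) :
    ∑ v ∈ univ.filter (fun v : ι → Bool => v l = a ∧ v m = a'), P v =
      (∑ v, P v + spin a * ∑ v, P v * walsh {l} v + spin a' * ∑ v, P v * walsh {m} v +
        spin a * spin a' * ∑ v, P v * walsh {l, m} v) / 4 := by
  -- the indicator of `v l = a` is `(1 + spin a * spin (v l)) / 2`
  simp only [walsh, prod_singleton, prod_pair hlm, mul_sum, ← sum_add_distrib, sum_div, sum_filter]
  refine sum_congr rfl fun v _ => ?_
  cases a <;> cases a' <;> cases v l <;> cases v m <;> simp [spin] <;> ring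

theorem pair_marginal_problem_near_uniform :
    ∃ c₀ : ℝ, 0 < c₀ ∧
      ∀ (N : ℕ), 2 ≤ N →
      ∀ ρ : Fin N → Fin N → Bool → Bool → ℝ,
        -- each ρ_{l,m}, l < m, is a probability distribution on {0,1}²
        (∀ l m, l < m → (∀ a a', 0 ≤ ρ l m a a') ∧ (∑ a : Bool, ∑ a' : Bool, ρ l m a a' = 1)) →
        -- marginal consistency: each coordinate has a single induced single-bit marginal
        (∃ ρ₁ : Fin N → Bool → ℝ, ∀ l m, l < m →
          (∀ a : Bool, ∑ a' : Bool, ρ l m a a' = ρ₁ l a) ∧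
          (∀ a' : Bool, ∑ a : Bool, ρ l m a a' = ρ₁ m a')) →
        -- all bit-pair masses are within c₀/N² of 1/4
        (∀ l m, l < m → ∀ a a' : Bool, |ρ l m a a' - 1 / 4| ≤ c₀ / (N : ℝ) ^ 2) →
        ∃ P : (Fin N → Bool) → ℝ,
          (∀ v, 0 ≤ P v) ∧ (∑ v, P v = 1) ∧
          ∀ l m, l < m → ∀ a a' : Bool,
            ∑ v ∈ univ.filter (fun v : Fin N → Bool => v l = a ∧ v m = a'), P v
              = ρ l m a a' := by
  -- every nonconstant coefficient is then at most `2 / (3 N²)`, and `(N + N²) · 2 / (3 N²) ≤ 1`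
  refine ⟨1 / 6, by norm_num, fun N hN ρ hprob ⟨ρ₁, hmarg⟩ hclose => ?_⟩
  set s : Fin N → ℝ := fun l => ∑ b, spin b * ρ₁ l b
  set t : Fin N × Fin N → ℝ := fun p => ∑ b, ∑ b', spin b * spin b' * ρ p.1 p.2 b b'
  have hs : ∀ l, |s l| ≤ 4 * (1 / 6 / (N : ℝ) ^ 2) := by
    intro l
    have : Nontrivial (Fin N) := Fin.nontrivial_iff_two_le.mpr hN
    obtain ⟨m, hml⟩ := exists_ne l
    rcases hml.lt_or_gt with hml | hlm
    · simpa only [s, (hmarg m l hml).2] using (abs_spin_moments_le (hclose m l hml)).2.1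
    · simpa only [s, (hmarg l m hlm).1] using (abs_spin_moments_le (hclose l m hlm)).1
  have ht : ∀ p ∈ orderedPairs (Fin N), |t p| ≤ 4 * (1 / 6 / (N : ℝ) ^ 2) :=
    fun p hp => (abs_spin_moments_le (hclose p.1 p.2 (mem_filter.mp hp).2)).2.2
  refine ⟨walshDensity s t, walshDensity_nonneg (by positivity) hs ht ?_, sum_walshDensity s t,
    fun l m hlm a a' => ?_⟩
  · have hN' : (2 : ℝ) ≤ N := by exact_mod_cast hN
    rw [Fintype.card_fin]
    field_simp
    nlinarith
  · rw [sum_filter_eq_walsh_moments _ hlm.ne, sum_walshDensity,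
      sum_walshDensity_mul_walsh_singleton, sum_walshDensity_mul_walsh_singleton,
      sum_walshDensity_mul_walsh_pair _ _ hlm, eq_spin_moments (ρ l m) a a', (hprob l m hlm).2]
    simp only [s, t, (hmarg l m hlm).1, (hmarg l m hlm).2]
end

section
/- Let b, b' ≥ 1 and let H be a b' × b matrix over F₂ whose rows are linearly independent and whose row space contains no nonzero vector of Hamming weight at most 2. Let A ⊆ F₂^{b'} be nonempty and let C be uniformly distributed on the (nonempty) set {c ∈ F₂^b : Hc ∈ A}. Then for all distinct l, m ∈ {1,…,b}, the pair (C_l, C_m) is uniformly distributed on F₂²; that is, Pr[C_l = a₁, C_m = a₂] = 1/4 for all (a₁, a₂) ∈ F₂². -/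
open Finset Matrix

lemma aux_surj_of_rows_indep {m n : Type*} [Fintype m] [Fintype n] [DecidableEq m]
    [DecidableEq n] (M : Matrix m n (ZMod 2))
    (h : LinearIndependent (ZMod 2) (fun i => M i)) :
    Function.Surjective M.mulVec := by
  have h1 : M.rank = Fintype.card m := by
    rw [Matrix.rank_eq_finrank_span_row]
    exact finrank_span_eq_card h
  have h2 : LinearMap.range M.mulVecLin = ⊤ := by
    apply Submodule.eq_top_of_finrank_eq
    rw [Module.finrank_fintype_fun_eq_card]
    exact h1
  intro y
  obtain ⟨x, hx⟩ := LinearMap.range_eq_top.1 h2 y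
  exact ⟨x, hx⟩

theorem uniform_pair_bits_on_syndrome_fiber (b b' : ℕ) (hb : 1 ≤ b) (hb' : 1 ≤ b')
    (H : Matrix (Fin b') (Fin b) (ZMod 2))
    (hind : LinearIndependent (ZMod 2) (fun i => H i))
    (hwt : ∀ v : Fin b → ZMod 2,
      v ∈ Submodule.span (ZMod 2) (Set.range fun i => H i) → v ≠ 0 →
        2 < (univ.filter (fun j => v j ≠ 0)).card)
    (A : Finset (Fin b' → ZMod 2)) (hA : A.Nonempty) :
    ∀ l m : Fin b, l ≠ m → ∀ a₁ a₂ : ZMod 2,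
      ((univ.filter (fun c : Fin b → ZMod 2 =>
          H.mulVec c ∈ A ∧ c l = a₁ ∧ c m = a₂)).card : ℝ)
        / ((univ.filter (fun c : Fin b → ZMod 2 => H.mulVec c ∈ A)).card : ℝ)
      = 1 / 4 := by
  intro l m hlm a₁ a₂
  classical
  -- the augmented matrix G with the two extra rows eₗ, eₘ
  set G : Matrix (Fin b' ⊕ Fin 2) (Fin b) (ZMod 2) :=
    Matrix.of (Sum.elim (fun i => H i) ![Pi.single l 1, Pi.single m 1]) with hG
  have hpair : LinearIndependent (ZMod 2)
      ![(Pi.single l 1 : Fin b → ZMod 2), Pi.single m 1] := by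
    rw [linearIndependent_fin2]
    constructor
    · intro h0
      have := congrFun h0 m
      simp at this
    · intro a ha
      have := congrFun ha l
      simp [Pi.single_apply, hlm.symm] at this
  have hdisj : Disjoint
      (Submodule.span (ZMod 2) (Set.range fun i => H i))
      (Submodule.span (ZMod 2)
        (Set.range ![(Pi.single l 1 : Fin b → ZMod 2), Pi.single m 1])) := by
    rw [Submodule.disjoint_def]
    intro v hv1 hv2
    by_contra hv0
    have hbig := hwt v hv1 hv0
    have hrange : Set.range ![(Pi.single l 1 : Fin b → ZMod 2), Pi.single m 1]
        = {Pi.single l 1, Pi.single m 1} := by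
      simp [Matrix.range_cons, Matrix.range_empty]
      exact Set.pair_comm _ _
    rw [hrange, Submodule.mem_span_pair] at hv2
    obtain ⟨p, q, hpq⟩ := hv2
    have hsub : (univ.filter (fun j => v j ≠ 0)) ⊆ {l, m} := by
      intro j hj
      rw [mem_filter] at hj
      by_contra hjlm
      simp only [mem_insert, mem_singleton, not_or] at hjlm
      apply hj.2
      rw [← hpq]
      simp [Pi.single_apply, hjlm.1, hjlm.2, Ne.symm hjlm.1, Ne.symm hjlm.2]
    have h2 : ({l, m} : Finset (Fin b)).card ≤ 2 :=
      (card_insert_le _ _).trans (by simp)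
    have h3 := card_le_card hsub
    omega
  have hGind : LinearIndependent (ZMod 2) (fun i => G i) := by
    have : (fun i => G i) =
        Sum.elim (fun i => H i) ![Pi.single l 1, Pi.single m 1] := rfl
    rw [this]
    exact hind.sum_type hpair hdisj
  have hGsurj := aux_surj_of_rows_indep G hGind
  -- extract the two kernel vectors u, w
  have hrow : ∀ (x : Fin b → ZMod 2) (t : Fin 2),
      G.mulVec x (Sum.inr t) = (![(Pi.single l 1 : Fin b → ZMod 2), Pi.single m 1] t) ⬝ᵥ x :=
    fun _ _ => rfl
  obtain ⟨u, hu⟩ := hGsurj (Sum.elim 0 ![1, 0])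
  obtain ⟨w, hw⟩ := hGsurj (Sum.elim 0 ![0, 1])
  have huker : H.mulVec u = 0 := by
    funext i; exact congrFun hu (Sum.inl i)
  have hwker : H.mulVec w = 0 := by
    funext i; exact congrFun hw (Sum.inl i)
  have hul : u l = 1 := by
    have := congrFun hu (Sum.inr 0)
    rwa [hrow, show (![(Pi.single l 1 : Fin b → ZMod 2), Pi.single m 1] (0 : Fin 2)) = Pi.single l 1 from rfl,
      single_dotProduct, one_mul] at this
  have hum : u m = 0 := by
    have := congrFun hu (Sum.inr 1)
    rwa [hrow, show (![(Pi.single l 1 : Fin b → ZMod 2), Pi.single m 1] (1 : Fin 2)) = Pi.single m 1 from rfl,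
      single_dotProduct, one_mul] at this
  have hwl : w l = 0 := by
    have := congrFun hw (Sum.inr 0)
    rwa [hrow, show (![(Pi.single l 1 : Fin b → ZMod 2), Pi.single m 1] (0 : Fin 2)) = Pi.single l 1 from rfl,
      single_dotProduct, one_mul] at this
  have hwm : w m = 1 := by
    have := congrFun hw (Sum.inr 1)
    rwa [hrow, show (![(Pi.single l 1 : Fin b → ZMod 2), Pi.single m 1] (1 : Fin 2)) = Pi.single m 1 from rfl,
      single_dotProduct, one_mul] at this
  -- the counting function
  set N : ZMod 2 → ZMod 2 → ℕ := fun x y =>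
    (univ.filter (fun c : Fin b → ZMod 2 =>
      H.mulVec c ∈ A ∧ c l = x ∧ c m = y)).card with hN
  -- all four counts are equal
  have hNN : ∀ x y : ZMod 2, N x y = N 0 0 := by
    intro x y
    set v : Fin b → ZMod 2 := x • u + y • w with hv
    have hvl : v l = x := by simp [hv, hul, hwl]
    have hvm : v m = y := by simp [hv, hum, hwm]
    have hvker : H.mulVec v = 0 := by
      simp [hv, Matrix.mulVec_add, Matrix.mulVec_smul, huker, hwker]
    have hv2 : v + v = 0 := by
      rw [← one_smul (ZMod 2) v, ← add_smul,
        show (1 + 1 : ZMod 2) = 0 by decide, zero_smul]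
    have hvv : ∀ c : Fin b → ZMod 2, c + v + v = c := by
      intro c
      rw [add_assoc, hv2, add_zero]
    apply Finset.card_bij' (i := fun c _ => c + v) (j := fun c _ => c + v)
    · intro c hc
      rw [mem_filter] at hc ⊢
      refine ⟨mem_univ _, ?_, ?_, ?_⟩
      · rw [Matrix.mulVec_add, hvker, add_zero]; exact hc.2.1
      · simp [hvl, hc.2.2.1, CharTwo.add_self_eq_zero]
      · simp [hvm, hc.2.2.2, CharTwo.add_self_eq_zero]
    · intro c hc
      rw [mem_filter] at hc ⊢
      refine ⟨mem_univ _, ?_, ?_, ?_⟩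
      · rw [Matrix.mulVec_add, hvker, add_zero]; exact hc.2.1
      · simp [hvl, hc.2.2.1]
      · simp [hvm, hc.2.2.2]
    · intro c _; exact hvv c
    · intro c _; exact hvv c
  -- denominator decomposes into the four classes
  have hD : (univ.filter (fun c : Fin b → ZMod 2 => H.mulVec c ∈ A)).card
      = ∑ p : ZMod 2 × ZMod 2, N p.1 p.2 := by
    rw [Finset.card_eq_sum_card_fiberwise
      (f := fun c : Fin b → ZMod 2 => (c l, c m)) (t := univ) (fun x _ => mem_univ _)]
    apply Finset.sum_congr rfl
    intro p _
    rw [hN, filter_filter]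
    congr 1
    apply filter_congr
    intro c _
    simp [Prod.ext_iff, and_assoc]
  have hDval : (univ.filter (fun c : Fin b → ZMod 2 => H.mulVec c ∈ A)).card
      = 4 * N 0 0 := by
    rw [hD]
    have : ∀ p : ZMod 2 × ZMod 2, N p.1 p.2 = N 0 0 := fun p => hNN p.1 p.2
    rw [Finset.sum_congr rfl (fun p _ => this p), Finset.sum_const, card_univ]
    simp [Fintype.card_prod]
  -- positivity
  obtain ⟨a, ha⟩ := hA
  obtain ⟨c₀, hc₀⟩ := hGsurj (Sum.elim a ![0, 0])
  have hc₀A : H.mulVec c₀ = a := by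
    funext i; exact congrFun hc₀ (Sum.inl i)
  have hc₀l : c₀ l = 0 := by
    have := congrFun hc₀ (Sum.inr 0)
    rwa [hrow, show (![(Pi.single l 1 : Fin b → ZMod 2), Pi.single m 1] (0 : Fin 2)) = Pi.single l 1 from rfl,
      single_dotProduct, one_mul] at this
  have hc₀m : c₀ m = 0 := by
    have := congrFun hc₀ (Sum.inr 1)
    rwa [hrow, show (![(Pi.single l 1 : Fin b → ZMod 2), Pi.single m 1] (1 : Fin 2)) = Pi.single m 1 from rfl,
      single_dotProduct, one_mul] at this
  have hNpos : 0 < N 0 0 := by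
    rw [hN]
    apply Finset.card_pos.2
    exact ⟨c₀, by simp [hc₀A, ha, hc₀l, hc₀m]⟩
  -- finish
  have hnum : (univ.filter (fun c : Fin b → ZMod 2 =>
      H.mulVec c ∈ A ∧ c l = a₁ ∧ c m = a₂)).card = N 0 0 := hNN a₁ a₂
  rw [hnum, hDval]
  have : (N 0 0 : ℝ) ≠ 0 := Nat.cast_ne_zero.2 hNpos.ne'
  push_cast
  field_simp
end

section
/- Let k ≥ 1, let μ₁,…,μ_k be probability distributions on finite sets Ω₁,…,Ω_k, and let B_i ⊆ Ω_i satisfy μ_i(B_i) ≤ 1/k for each i ∈ {1,…,k}. Then there exists a probability distribution ν on the product Ω₁ × ⋯ × Ω_k whose i-th coordinate marginal equals μ_i for every i, and such that ν({ω : there exist i ≠ j with ω_i ∈ B_i and ω_j ∈ B_j}) = 0; i.e., under ν, with probability one at most one coordinate lies in its designated set. -/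
/-!
Write `p i = μ i (B i)`, so that `∑ i, p i ≤ 1`. Draw an index `J` that equals `i` with
probability `p i` and "none" with the remaining probability `1 - ∑ i, p i`; given `J`, draw the
coordinates independently, coordinate `J` from `μ J` conditioned on `B J` and every other
coordinate `i` from `μ i` conditioned on the complement of `B i`. Coordinate `i` then has law
`p i • μ i(· | B i) + (1 - p i) • μ i(· | (B i)ᶜ) = μ i`, and only coordinate `J` can lie in its
set.
-/

open Finset

section Product

variable {R : Type*} [CommSemiring R] {ι : Type*} [Fintype ι] [DecidableEq ι]
  {Ω : ι → Type*} [∀ i, Fintype (Ω i)]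

theorem sum_filter_apply_eq_mul_prod_sum [∀ i, DecidableEq (Ω i)] (f : ∀ i, Ω i → R) (i : ι)
    (a : Ω i) :
    ∑ ω ∈ univ.filter (fun ω : ∀ i, Ω i => ω i = a), ∏ l, f l (ω l) =
      f i a * ∏ l ∈ univ.erase i, ∑ b, f l b := by
  calc _ = ∑ ω ∈ Fintype.piFinset (Function.update (fun l => (univ : Finset (Ω l))) i {a}),
        ∏ l, f l (ω l) := by
          rw [Fintype.piFinset_update_singleton_eq_filter_piFinset_eq
            (fun l => (univ : Finset (Ω l))) i (mem_univ a), Fintype.piFinset_univ]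
    _ = ∏ l, ∑ b ∈ Function.update (fun l => (univ : Finset (Ω l))) i {a} l, f l b :=
          (prod_univ_sum _ _).symm
    _ = _ := by
      rw [← mul_prod_erase univ _ (mem_univ i)]
      refine congrArg₂ _ (by simp) (prod_congr rfl fun l hl => ?_)
      rw [Function.update_of_ne (ne_of_mem_erase hl)]

variable {J : Type*} [Fintype J]

def mixtureOfProducts (w : J → R) (κ : J → ∀ i, Ω i → R) (ω : ∀ i, Ω i) : R :=
  ∑ j, w j * ∏ i, κ j i (ω i)

variable {w : J → R} {κ : J → ∀ i, Ω i → R}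

theorem sum_mixtureOfProducts (hκ : ∀ j, w j ≠ 0 → ∀ i, ∑ a, κ j i a = 1) :
    ∑ ω, mixtureOfProducts w κ ω = ∑ j, w j := by
  simp only [mixtureOfProducts]
  rw [sum_comm]
  refine sum_congr rfl fun j _ => ?_
  rw [← mul_sum, ← Fintype.prod_sum]
  by_cases hj : w j = 0
  · simp [hj]
  · simp [hκ j hj]

theorem sum_filter_apply_mixtureOfProducts [∀ i, DecidableEq (Ω i)]
    (hκ : ∀ j, w j ≠ 0 → ∀ i, ∑ a, κ j i a = 1) (i : ι) (a : Ω i) :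
    ∑ ω ∈ univ.filter (fun ω : ∀ i, Ω i => ω i = a), mixtureOfProducts w κ ω =
      ∑ j, w j * κ j i a := by
  simp only [mixtureOfProducts]
  rw [sum_comm]
  refine sum_congr rfl fun j _ => ?_
  rw [← mul_sum, sum_filter_apply_eq_mul_prod_sum]
  by_cases hj : w j = 0
  · simp [hj]
  · simp [hκ j hj]

end Product

section Conditioning

variable {α : Type*} [DecidableEq α] (μ : α → ℝ) (s : Finset α)

/-- `μ` conditioned on `s`; identically `0` when `μ` has no mass on `s`. -/
noncomputable def condOn (a : α) : ℝ := if a ∈ s then μ a / ∑ b ∈ s, μ b else 0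

variable {μ s}

theorem condOn_nonneg (hμ : ∀ a, 0 ≤ μ a) (a : α) : 0 ≤ condOn μ s a := by
  unfold condOn
  split_ifs
  · exact div_nonneg (hμ a) (sum_nonneg fun b _ => hμ b)
  · exact le_rfl

theorem condOn_of_notMem {a : α} (ha : a ∉ s) : condOn μ s a = 0 := if_neg ha

theorem sum_condOn [Fintype α] (hs : ∑ b ∈ s, μ b ≠ 0) : ∑ a, condOn μ s a = 1 := by
  simp [condOn, ← sum_div, div_self hs]

theorem sum_mul_condOn (hμ : ∀ a, 0 ≤ μ a) {a : α} (ha : a ∈ s) :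
    (∑ b ∈ s, μ b) * condOn μ s a = μ a := by
  rcases eq_or_ne (∑ b ∈ s, μ b) 0 with hs | hs
  · rw [hs, zero_mul, (sum_eq_zero_iff_of_nonneg fun b _ => hμ b).1 hs a ha]
  · rw [condOn, if_pos ha, mul_div_cancel₀ _ hs]

theorem sum_mul_condOn_add_sum_compl_mul_condOn [Fintype α] (hμ : ∀ a, 0 ≤ μ a) (a : α) :
    (∑ b ∈ s, μ b) * condOn μ s a + (∑ b ∈ sᶜ, μ b) * condOn μ sᶜ a = μ a := by
  by_cases ha : a ∈ s
  · rw [sum_mul_condOn hμ ha, condOn_of_notMem (notMem_compl.2 ha), mul_zero, add_zero]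
  · rw [sum_mul_condOn hμ (mem_compl.2 ha), condOn_of_notMem ha, mul_zero, zero_add]

end Conditioning

section AtMostOneBad

variable {ι : Type*} {Ω : ι → Type*} (μ : ∀ i, Ω i → ℝ) (B : ∀ i, Finset (Ω i))

section

variable [Fintype ι]

/-- `J = some i`: coordinate `i` is the one in its set; `J = none`: no coordinate is. -/
noncomputable def badIndexWeight (J : Option ι) : ℝ :=
  J.elim (1 - ∑ i, ∑ a ∈ B i, μ i a) fun i => ∑ a ∈ B i, μ i a

variable {μ B}

theorem sum_badIndexWeight : ∑ J, badIndexWeight μ B J = 1 := by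
  simp [Fintype.sum_option, badIndexWeight]

theorem badIndexWeight_nonneg (hμ0 : ∀ i a, 0 ≤ μ i a) (hB : ∑ i, ∑ a ∈ B i, μ i a ≤ 1)
    (J : Option ι) : 0 ≤ badIndexWeight μ B J := by
  cases J with
  | none => exact sub_nonneg.2 hB
  | some i => exact sum_nonneg fun a _ => hμ0 i a

end

variable [DecidableEq ι] [∀ i, Fintype (Ω i)] [∀ i, DecidableEq (Ω i)]

noncomputable def badIndexKernel (J : Option ι) (i : ι) : Ω i → ℝ :=
  if J = some i then condOn (μ i) (B i) else condOn (μ i) (B i)ᶜ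

variable {μ B}

theorem badIndexKernel_nonneg (hμ0 : ∀ i a, 0 ≤ μ i a) (J : Option ι) (i : ι) (a : Ω i) :
    0 ≤ badIndexKernel μ B J i a := by
  unfold badIndexKernel
  split_ifs <;> exact condOn_nonneg (hμ0 i) a

variable [Fintype ι]

theorem sum_badIndexKernel (hμ0 : ∀ i a, 0 ≤ μ i a) (hμ1 : ∀ i, ∑ a, μ i a = 1)
    (hB : ∑ i, ∑ a ∈ B i, μ i a ≤ 1) (J : Option ι) (hJ : badIndexWeight μ B J ≠ 0) (i : ι) :
    ∑ a, badIndexKernel μ B J i a = 1 := by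
  unfold badIndexKernel
  split_ifs with hJi
  · subst hJi
    exact sum_condOn hJ
  · -- `μ i` has no mass off `B i` only if `p i = 1`, which leaves no weight for `J ≠ some i`.
    refine sum_condOn fun hcompl => hJ ?_
    have hi : badIndexWeight μ B (some i) = 1 := by
      rw [← hμ1 i, ← sum_compl_add_sum (B i), hcompl, zero_add]
      rfl
    have hrest : ∑ J' ∈ univ.erase (some i), badIndexWeight μ B J' = 0 := by
      rw [← add_right_inj (badIndexWeight μ B (some i)), add_sum_erase _ _ (mem_univ _),
        sum_badIndexWeight, hi, add_zero]
    exact (sum_eq_zero_iff_of_nonneg fun J' _ => badIndexWeight_nonneg hμ0 hB J').1 hrest J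
      (mem_erase.2 ⟨hJi, mem_univ J⟩)

theorem sum_badIndexWeight_mul_badIndexKernel (hμ0 : ∀ i a, 0 ≤ μ i a)
    (hμ1 : ∀ i, ∑ a, μ i a = 1) (i : ι) (a : Ω i) :
    ∑ J, badIndexWeight μ B J * badIndexKernel μ B J i a = μ i a := by
  have hrest : ∑ J ∈ univ.erase (some i), badIndexWeight μ B J * badIndexKernel μ B J i a =
      (∑ b ∈ (B i)ᶜ, μ i b) * condOn (μ i) (B i)ᶜ a := by
    rw [sum_congr rfl fun J hJ => by rw [badIndexKernel, if_neg (ne_of_mem_erase hJ)], ← sum_mul,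
      sum_erase_eq_sub (mem_univ _), sum_badIndexWeight, ← hμ1 i, ← sum_compl_add_sum (B i)]
    exact congrArg (· * _) (add_sub_cancel_right _ _)
  rw [← add_sum_erase _ _ (mem_univ (some i)), hrest, badIndexKernel, if_pos rfl]
  exact sum_mul_condOn_add_sum_compl_mul_condOn (hμ0 i) a

theorem mixtureOfProducts_badIndex_eq_zero_of_mem_of_mem {ω : ∀ i, Ω i} {i j : ι} (hij : i ≠ j)
    (hi : ω i ∈ B i) (hj : ω j ∈ B j) :
    mixtureOfProducts (badIndexWeight μ B) (badIndexKernel μ B) ω = 0 := by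
  refine sum_eq_zero fun J _ => mul_eq_zero_of_right _ ?_
  have hvanish : ∀ l, ω l ∈ B l → J ≠ some l → badIndexKernel μ B J l (ω l) = 0 :=
    fun l hl hJl => by rw [badIndexKernel, if_neg hJl, condOn_of_notMem (notMem_compl.2 hl)]
  by_cases hJi : J = some i
  · exact prod_eq_zero (mem_univ j)
      (hvanish j hj (hJi ▸ fun h => hij (Option.some_injective _ h)))
  · exact prod_eq_zero (mem_univ i) (hvanish i hi hJi)

theorem exists_coupling_at_most_one_mem (hμ0 : ∀ i a, 0 ≤ μ i a) (hμ1 : ∀ i, ∑ a, μ i a = 1)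
    (hB : ∑ i, ∑ a ∈ B i, μ i a ≤ 1) :
    ∃ ν : (∀ i, Ω i) → ℝ,
      (∀ ω, 0 ≤ ν ω) ∧
      (∑ ω, ν ω = 1) ∧
      (∀ i a, ∑ ω ∈ univ.filter (fun ω : ∀ i, Ω i => ω i = a), ν ω = μ i a) ∧
      (∀ ω i j, i ≠ j → ω i ∈ B i → ω j ∈ B j → ν ω = 0) := by
  have hκ := sum_badIndexKernel hμ0 hμ1 hB
  refine ⟨mixtureOfProducts (badIndexWeight μ B) (badIndexKernel μ B), fun ω => ?_,
    (sum_mixtureOfProducts hκ).trans sum_badIndexWeight, fun i a => ?_, ?_⟩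
  · exact sum_nonneg fun J _ => mul_nonneg (badIndexWeight_nonneg hμ0 hB J)
      (prod_nonneg fun i _ => badIndexKernel_nonneg hμ0 J i (ω i))
  · rw [sum_filter_apply_mixtureOfProducts hκ, sum_badIndexWeight_mul_badIndexKernel hμ0 hμ1]
  · exact fun ω i j hij hi hj => mixtureOfProducts_badIndex_eq_zero_of_mem_of_mem hij hi hj

end AtMostOneBad

theorem exists_coupling_at_most_one_bad_general (k : ℕ)
    (Ω : Fin k → Type*) [∀ i, Fintype (Ω i)] [∀ i, DecidableEq (Ω i)]
    (μ : (i : Fin k) → Ω i → ℝ)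
    (hμ0 : ∀ i a, 0 ≤ μ i a) (hμ1 : ∀ i, ∑ a, μ i a = 1)
    (B : (i : Fin k) → Finset (Ω i))
    (hB : ∀ i, ∑ a ∈ B i, μ i a ≤ 1 / (k : ℝ)) :
    ∃ ν : ((i : Fin k) → Ω i) → ℝ,
      (∀ ω, 0 ≤ ν ω) ∧
      (∑ ω, ν ω = 1) ∧
      (∀ i a, ∑ ω ∈ univ.filter (fun ω : (i : Fin k) → Ω i => ω i = a), ν ω = μ i a) ∧
      (∑ ω ∈ univ.filter
          (fun ω : (i : Fin k) → Ω i => ∃ i j, i ≠ j ∧ ω i ∈ B i ∧ ω j ∈ B j), ν ω = 0) := by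
  have hsum : ∑ i, ∑ a ∈ B i, μ i a ≤ 1 :=
    calc ∑ i, ∑ a ∈ B i, μ i a ≤ ∑ _i : Fin k, 1 / (k : ℝ) := sum_le_sum fun i _ => hB i
      _ = (k : ℝ) / k := by simp [div_eq_mul_inv]
      _ ≤ 1 := div_self_le_one _
  obtain ⟨ν, hν0, hν1, hνμ, hνB⟩ := exists_coupling_at_most_one_mem hμ0 hμ1 hsum
  refine ⟨ν, hν0, hν1, hνμ, sum_eq_zero fun ω hω => ?_⟩
  obtain ⟨i, j, hij, hi, hj⟩ := (mem_filter.1 hω).2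
  exact hνB ω i j hij hi hj

theorem exists_coupling_at_most_one_bad (k : ℕ) (hk : 1 ≤ k)
    (Ω : Fin k → Type*) [∀ i, Fintype (Ω i)] [∀ i, DecidableEq (Ω i)]
    (μ : (i : Fin k) → Ω i → ℝ)
    (hμ0 : ∀ i a, 0 ≤ μ i a) (hμ1 : ∀ i, ∑ a, μ i a = 1)
    (B : (i : Fin k) → Finset (Ω i))
    (hB : ∀ i, ∑ a ∈ B i, μ i a ≤ 1 / (k : ℝ)) :
    ∃ ν : ((i : Fin k) → Ω i) → ℝ,
      (∀ ω, 0 ≤ ν ω) ∧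
      (∑ ω, ν ω = 1) ∧
      (∀ i a, ∑ ω ∈ univ.filter (fun ω : (i : Fin k) → Ω i => ω i = a), ν ω = μ i a) ∧
      (∑ ω ∈ univ.filter
          (fun ω : (i : Fin k) → Ω i => ∃ i j, i ≠ j ∧ ω i ∈ B i ∧ ω j ∈ B j), ν ω = 0) :=
  exists_coupling_at_most_one_bad_general k Ω μ hμ0 hμ1 B hB
end

section
/- Let M ≥ 1, n ≥ 1, b' ≥ 1, and 1 ≤ m ≤ 2^{b'}. Fix x ∈ {0,1}^n of Hamming weight w, index sets I_1,…,I_n ⊆ {1,…,M}, and functions g_i : {0,1}^{I_i} → F₂^{b'}. Let A₁,…,Aₙ be independent random sets, each uniformly distributed over the m-element subsets of F₂^{b'}, and define f_i(u) = 1 if g_i(u) ∈ A_i and f_i(u) = 0 otherwise. Let 𝒞(x) = {c ∈ {0,1}^M : f_i(c_{I_i}) = x_i for all i ∈ {1,…,n}} be the set of valid codewords for x. Then E[|𝒞(x)|] = 2^M · q^w · (1−q)^{n−w}, where q = m/2^{b'}. -/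
/-!
Summing over the codewords `c` first, the expected count is `∑ c, ∏ i, P(g i (c_{I i}) ∈ A i ↔ x i)`
because the `A i` are independent. A uniformly random `m`-subset of an `N`-element set contains a
fixed point with probability `m / N`, so every factor is `q` or `1 - q` according to `x i`,
whatever `c` is, and each of the `2 ^ M` codewords contributes `q ^ w * (1 - q) ^ (n - w)`.
-/

open Finset

section Subsets

variable {α : Type*} [Fintype α] [DecidableEq α] {m : ℕ}

theorem card_subsets_notMem (m : ℕ) (v : α) :
    #{s : {s : Finset α // #s = m} | v ∉ s.1} = (Fintype.card α - 1).choose m := by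
  have : ({s : {s : Finset α // #s = m} | v ∉ s.1} : Finset _).map (.subtype _)
      = powersetCard m (univ.erase v) := by
    ext s
    simp [subset_erase, and_comm]
  rw [← card_map, this, card_powersetCard, card_erase_of_mem (mem_univ v), card_univ]

theorem card_subsets_mem_add_card_subsets_notMem (m : ℕ) (v : α) :
    #{s : {s : Finset α // #s = m} | v ∈ s.1} + #{s : {s : Finset α // #s = m} | v ∉ s.1}
      = (Fintype.card α).choose m := by
  rw [card_filter_add_card_filter_not, card_univ, Fintype.card_finset_len]

theorem card_subsets_mem_mul_card (hm : m ≤ Fintype.card α) (v : α) :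
    (#{s : {s : Finset α // #s = m} | v ∈ s.1} : ℝ) * Fintype.card α
      = m * (Fintype.card α).choose m := by
  obtain ⟨N, hN⟩ : ∃ N, Fintype.card α = N + 1 :=
    Nat.exists_eq_add_one.mpr (Fintype.card_pos_iff.mpr ⟨v⟩)
  have hsplit := card_subsets_mem_add_card_subsets_notMem m v
  rw [card_subsets_notMem, hN, Nat.add_sub_cancel] at hsplit
  have hchoose := Nat.choose_mul_succ_eq N m
  rw [hN] at hm ⊢
  rw [← Nat.cast_inj (R := ℝ)] at hsplit hchoose
  push_cast [hm] at hsplit hchoose ⊢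
  linear_combination (N + 1 : ℝ) * hsplit - hchoose

theorem card_subsets_mem_div_choose (hm : m ≤ Fintype.card α) (v : α) :
    (#{s : {s : Finset α // #s = m} | v ∈ s.1} : ℝ) / (Fintype.card α).choose m
      = m / Fintype.card α := by
  have hC : ((Fintype.card α).choose m : ℝ) ≠ 0 := by exact_mod_cast (Nat.choose_pos hm).ne'
  have hN : (Fintype.card α : ℝ) ≠ 0 := by exact_mod_cast (Fintype.card_pos_iff.mpr ⟨v⟩).ne'
  rw [div_eq_div_iff hC hN, card_subsets_mem_mul_card hm]

theorem card_subsets_notMem_div_choose (hm : m ≤ Fintype.card α) (v : α) :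
    (#{s : {s : Finset α // #s = m} | v ∉ s.1} : ℝ) / (Fintype.card α).choose m
      = 1 - m / Fintype.card α := by
  have hC : ((Fintype.card α).choose m : ℝ) ≠ 0 := by exact_mod_cast (Nat.choose_pos hm).ne'
  rw [← card_subsets_mem_div_choose hm v]
  rw [← card_subsets_mem_add_card_subsets_notMem m v] at hC ⊢
  push_cast at hC ⊢
  rw [eq_sub_iff_add_eq, ← add_div, add_comm, div_self hC]

end Subsets

theorem sum_card_filter_forall_eq_sum_prod {ι β γ : Type*} [Fintype ι] [DecidableEq ι]
    [Fintype β] [Fintype γ] (P : ι → γ → β → Prop) [∀ i c, DecidablePred (P i c)]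
    [∀ A : ι → β, DecidablePred fun c => ∀ i, P i c (A i)] :
    ∑ A : ι → β, #{c | ∀ i, P i c (A i)} = ∑ c, ∏ i, #{b | P i c b} := by
  simp only [card_filter]
  rw [sum_comm]
  refine sum_congr rfl fun c _ => ?_
  simp only [prod_univ_sum, Fintype.piFinset_univ, prod_boole, mem_univ, forall_const]

theorem prod_ite_eq_pow_mul_pow {ι R : Type*} [Fintype ι] [CommMonoid R] (p : ι → Prop)
    [DecidablePred p] (a b : R) :
    ∏ i, (if p i then a else b) = a ^ #{i | p i} * b ^ (Fintype.card ι - #{i | p i}) := by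
  rw [prod_ite, prod_const, prod_const, ← card_univ,
    ← card_filter_add_card_filter_not (s := univ) p, Nat.add_sub_cancel_left]

theorem expected_number_of_valid_codewords_general (M n b' m w : ℕ)
    (hm2 : m ≤ 2 ^ b')
    (x : Fin n → Bool) (hw : (univ.filter (fun i => x i = true)).card = w)
    (I : Fin n → Finset (Fin M))
    (g : (i : Fin n) → ({j // j ∈ I i} → Bool) → (Fin b' → ZMod 2)) :
    (∑ A : Fin n → {s : Finset (Fin b' → ZMod 2) // s.card = m},
        ((univ.filter (fun c : Fin M → Bool =>
          ∀ i, (g i (fun j : {j // j ∈ I i} => c j.1) ∈ (A i).1 ↔ x i = true))).card : ℝ))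
      / (((2 ^ b').choose m : ℝ)) ^ n
    = 2 ^ M * ((m : ℝ) / 2 ^ b') ^ w * (1 - (m : ℝ) / 2 ^ b') ^ (n - w) := by
  have hcard : Fintype.card (Fin b' → ZMod 2) = 2 ^ b' := by simp
  have hcoord (c : Fin M → Bool) (i : Fin n) :
      (#{s : {s : Finset (Fin b' → ZMod 2) // #s = m} |
          g i (fun j => c j.1) ∈ s.1 ↔ x i = true} : ℝ) / (2 ^ b').choose m
        = if x i = true then (m : ℝ) / 2 ^ b' else 1 - (m : ℝ) / 2 ^ b' := by
    rw [← hcard] at hm2 ⊢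
    cases x i
    · simpa using card_subsets_notMem_div_choose hm2 _
    · simpa using card_subsets_mem_div_choose hm2 _
  rw [← Nat.cast_sum,
    sum_card_filter_forall_eq_sum_prod fun i (c : Fin M → Bool) (s : {s : Finset _ // #s = m}) =>
      g i (fun j => c j.1) ∈ s.1 ↔ x i = true,
    Nat.cast_sum, sum_div, ← Fin.prod_const]
  simp only [Nat.cast_prod, ← prod_div_distrib, hcoord, prod_ite_eq_pow_mul_pow, hw, sum_const,
    card_univ, Fintype.card_fun, Fintype.card_bool, Fintype.card_fin, nsmul_eq_mul]
  push_cast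
  ring

theorem expected_number_of_valid_codewords (M n b' m w : ℕ)
    (hM : 1 ≤ M) (hn : 1 ≤ n) (hb' : 1 ≤ b') (hm1 : 1 ≤ m) (hm2 : m ≤ 2 ^ b')
    (x : Fin n → Bool) (hw : (univ.filter (fun i => x i = true)).card = w)
    (I : Fin n → Finset (Fin M))
    (g : (i : Fin n) → ({j // j ∈ I i} → Bool) → (Fin b' → ZMod 2)) :
    (∑ A : Fin n → {s : Finset (Fin b' → ZMod 2) // s.card = m},
        ((univ.filter (fun c : Fin M → Bool =>
          ∀ i, (g i (fun j : {j // j ∈ I i} => c j.1) ∈ (A i).1 ↔ x i = true))).card : ℝ))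
      / (((2 ^ b').choose m : ℝ)) ^ n
    = 2 ^ M * ((m : ℝ) / 2 ^ b') ^ w * (1 - (m : ℝ) / 2 ^ b') ^ (n - w) :=
  expected_number_of_valid_codewords_general M n b' m w hm2 x hw I g
end
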